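/- arXiv:1812.11932 — 5 statements merged into one kernel-verified Lean document; each statement's English description precedes it below -/
import Mathlib

section
/- With weights w₀ = 2/3, w₁ = w₋₁ = 1/6 and scale γ = 3/2, the system of six second-order moment-matching equations for a three-Gaussian mixture in one dimension is satisfied by the choices m_{i0} = z_i√(γΛ), m_{i1} = b, m_{i2} = z_i b'√(γΛ), m_{i3} = (1/2)b''z_i²γΛ + (1/2)bb', S_{i1} = Λ/2, S_{02} = 0, S_{i2} = z_i Λ'√(γΛ) for i = ±1, S_{03} = (1/2)Λ'b, and S_{i3} = (3/4)Λ''Λ·z_i² + (1/2)Λ'b for i = ±1, for arbitrary real values of b, b', b'', Λ > 0, Λ', Λ''. -/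
set_option maxHeartbeats 1000000 in
/-- The six second-order moment-matching equations for the three-Gaussian
mixture in 1D hold with weights `w₀ = 2/3`, `w₁ = w₋₁ = 1/6`, `γ = 3/2`,
and the stated choices of `m_{ij}` and `S_{ij}`. -/
theorem three_gaussian_matching
    (b b' b'' Λ Λ' Λ'' : ℝ) (hΛ : 0 < Λ) :
    let γ : ℝ := 3/2
    let w : ℤ → ℝ := fun z => if z = 0 then 2/3 else 1/6
    let I : Finset ℤ := {-1, 0, 1}
    let m0 : ℤ → ℝ := fun z => (z : ℝ) * Real.sqrt (γ * Λ)
    let m1 : ℤ → ℝ := fun _ => b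
    let m2 : ℤ → ℝ := fun z => (z : ℝ) * b' * Real.sqrt (γ * Λ)
    let m3 : ℤ → ℝ := fun z => (1/2) * b'' * (z : ℝ)^2 * γ * Λ + (1/2) * b * b'
    let S1 : ℤ → ℝ := fun _ => Λ / 2
    let S2 : ℤ → ℝ := fun z => (z : ℝ) * Λ' * Real.sqrt (γ * Λ)
    let S3 : ℤ → ℝ := fun z => if z = 0 then (1/2) * Λ' * b
      else (3/4) * Λ'' * Λ * (z : ℝ)^2 + (1/2) * Λ' * b
    (∑ z ∈ I, w z * m1 z) = b ∧
    (1/2) * (∑ z ∈ I, w z * S1 z) + (1/2) * (∑ z ∈ I, w z * (m0 z)^2) = Λ / 2 ∧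
    (∑ z ∈ I, w z * m3 z) = (1/2) * b * b' + (1/4) * Λ * b'' ∧
    (1/2) * (∑ z ∈ I, w z * S3 z)
      + (1/2) * (∑ z ∈ I, w z * (2 * m0 z * m2 z + (m1 z)^2))
      = (1/2) * b^2 + (1/4) * b * Λ' + (1/2) * Λ * b' + (1/8) * Λ * Λ'' ∧
    (1/2) * (∑ z ∈ I, w z * m1 z * S1 z) + (1/2) * (∑ z ∈ I, w z * m0 z * S2 z)
      + (1/2) * (∑ z ∈ I, w z * (m0 z)^2 * m1 z)
      = (1/2) * b * Λ + (1/4) * Λ * Λ' ∧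
    (1/8) * (∑ z ∈ I, w z * (S1 z)^2) + (1/4) * (∑ z ∈ I, w z * (m0 z)^2 * S1 z)
      + (1/24) * (∑ z ∈ I, w z * (m0 z)^4) = Λ^2 / 8 := by
  intro γ w I m0 m1 m2 m3 S1 S2 S3
  obtain ⟨s, hs, he⟩ : ∃ s : ℝ, s ^ 2 = 3 / 2 * Λ ∧ Real.sqrt (γ * Λ) = s :=
    ⟨Real.sqrt (γ * Λ), Real.sq_sqrt (by positivity), rfl⟩
  simp only [I, m0, m1, m2, m3, S1, S2, S3, w, γ, he, Finset.sum_insert, Finset.mem_insert,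
    Finset.mem_singleton, Finset.sum_singleton]
  norm_num
  have h1 : b' * s ^ 2 = b' * (3 / 2 * Λ) := by rw [hs]
  have h2 : b * s ^ 2 = b * (3 / 2 * Λ) := by rw [hs]
  have h3 : Λ' * s ^ 2 = Λ' * (3 / 2 * Λ) := by rw [hs]
  have h4 : Λ * s ^ 2 = Λ * (3 / 2 * Λ) := by rw [hs]
  have h5 : s ^ 2 * s ^ 2 = 3 / 2 * Λ * (3 / 2 * Λ) := by rw [hs]
  repeat' apply And.intro
  all_goals nlinarith [h1, h2, h3, h4, h5, hs]
end

section
/- Suppose b, Λ : ℝ → ℝ are C², Λ(x) ≥ σ₀² > 0, b bounded by B and Λ' bounded by L. Let m : [0,h] → ℝ solve ṁ = b(m) with m(0) = x₀ + z√((3/2)Λ(x₀)h) for z ∈ {-1,0,1}, and let g(x) = Λ(x) − (1/2)Λ(x₀). If √((3/2)‖Λ‖_∞ h) + Bh < σ₀²/(2L), then g(m(t)) > 0 for all t ∈ [0,h]; consequently S(h) = ∫₀ʰ g(m(t)) dt > 0. -/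
open Set intervalIntegral

/-- Positivity of the variance produced by the 1D ODE-flow Gaussian mixture
scheme for small enough step size. -/
theorem variance_positive_1d
    (b Λ : ℝ → ℝ) (hb : ContDiff ℝ 2 b) (hΛ : ContDiff ℝ 2 Λ)
    (σ₀ B L M : ℝ) (hσ₀ : 0 < σ₀) (hL : 0 < L)
    (hΛlow : ∀ x, σ₀ ^ 2 ≤ Λ x) (hΛup : ∀ x, Λ x ≤ M)
    (hbB : ∀ x, |b x| ≤ B) (hΛ'L : ∀ x, |deriv Λ x| ≤ L)
    (x₀ : ℝ) (z : ℝ) (hz : z ∈ ({-1, 0, 1} : Set ℝ))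
    (h : ℝ) (hh : 0 < h)
    (hsmall : Real.sqrt ((3/2) * M * h) + B * h < σ₀ ^ 2 / (2 * L))
    (m : ℝ → ℝ)
    (hm0 : m 0 = x₀ + z * Real.sqrt ((3/2) * Λ x₀ * h))
    (hmode : ∀ t ∈ Icc (0 : ℝ) h, HasDerivAt m (b (m t)) t) :
    (∀ t ∈ Icc (0 : ℝ) h, 0 < Λ (m t) - (1/2) * Λ x₀) ∧
    0 < ∫ t in (0:ℝ)..h, (Λ (m t) - (1/2) * Λ x₀) := by
  have hB : 0 ≤ B := le_trans (abs_nonneg _) (hbB 0)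
  -- Λ is L-Lipschitz
  have hΛdiff : Differentiable ℝ Λ := hΛ.differentiable (by norm_num)
  have hΛlip : ∀ a c : ℝ, |Λ a - Λ c| ≤ L * |a - c| := by
    intro a c
    have := convex_univ.norm_image_sub_le_of_norm_hasDerivWithin_le
      (f := Λ) (f' := deriv Λ) (C := L)
      (fun x _ => (hΛdiff x).hasDerivAt.hasDerivWithinAt)
      (fun x _ => by simpa using hΛ'L x) (mem_univ c) (mem_univ a)
    simpa [Real.norm_eq_abs] using this
  -- m moves at most B*t on [0,h]
  have hmB : ∀ t ∈ Icc (0 : ℝ) h, |m t - m 0| ≤ B * t := by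
    intro t ht
    have := (convex_Icc (0:ℝ) h).norm_image_sub_le_of_norm_hasDerivWithin_le
      (f := m) (f' := fun s => b (m s)) (C := B)
      (fun s hs => (hmode s hs).hasDerivWithinAt)
      (fun s _ => by simpa using hbB (m s)) (left_mem_Icc.2 hh.le) ht
    simpa [Real.norm_eq_abs, abs_of_nonneg ht.1] using this
  -- |m 0 - x₀| ≤ sqrt((3/2) M h)
  have hz1 : |z| ≤ 1 := by
    rcases hz with rfl | rfl | rfl <;> norm_num
  have hsqrt : Real.sqrt ((3/2) * Λ x₀ * h) ≤ Real.sqrt ((3/2) * M * h) := by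
    apply Real.sqrt_le_sqrt
    have := hΛup x₀
    nlinarith
  have hm0x : |m 0 - x₀| ≤ Real.sqrt ((3/2) * M * h) := by
    rw [hm0]
    have : x₀ + z * Real.sqrt ((3/2) * Λ x₀ * h) - x₀ = z * Real.sqrt ((3/2) * Λ x₀ * h) := by ring
    rw [this, abs_mul, abs_of_nonneg (Real.sqrt_nonneg _)]
    calc |z| * Real.sqrt ((3/2) * Λ x₀ * h) ≤ 1 * Real.sqrt ((3/2) * Λ x₀ * h) := by
          apply mul_le_mul_of_nonneg_right hz1 (Real.sqrt_nonneg _)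
      _ ≤ Real.sqrt ((3/2) * M * h) := by simpa using hsqrt
  -- main pointwise positivity
  have hpos : ∀ t ∈ Icc (0 : ℝ) h, 0 < Λ (m t) - (1/2) * Λ x₀ := by
    intro t ht
    have hdist : |m t - x₀| ≤ Real.sqrt ((3/2) * M * h) + B * h := by
      have h1 := hmB t ht
      have h2 : B * t ≤ B * h := mul_le_mul_of_nonneg_left ht.2 hB
      calc |m t - x₀| ≤ |m t - m 0| + |m 0 - x₀| := abs_sub_le _ _ _
        _ ≤ B * h + Real.sqrt ((3/2) * M * h) := by linarith
        _ = _ := by ring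
    have hlip := hΛlip x₀ (m t)
    have hΛmt : Λ x₀ - L * |m t - x₀| ≤ Λ (m t) := by
      have : |Λ x₀ - Λ (m t)| ≤ L * |m t - x₀| := by
        simpa [abs_sub_comm] using hlip
      have := abs_le.1 this
      linarith [this.2]
    have hL2 : L * |m t - x₀| < σ₀ ^ 2 / 2 := by
      have : L * |m t - x₀| < L * (σ₀ ^ 2 / (2 * L)) :=
        mul_lt_mul_of_pos_left (lt_of_le_of_lt hdist hsmall) hL
      have heq : L * (σ₀ ^ 2 / (2 * L)) = σ₀ ^ 2 / 2 := by
        field_simp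
      linarith [heq ▸ this]
    have := hΛlow x₀
    linarith
  refine ⟨hpos, ?_⟩
  -- continuity of the integrand on [0,h]
  have hmcont : ContinuousOn m (Icc 0 h) :=
    fun t ht => (hmode t ht).continuousAt.continuousWithinAt
  have hcont : ContinuousOn (fun t => Λ (m t) - (1/2) * Λ x₀) (Icc 0 h) :=
    ((hΛ.continuous.comp_continuousOn hmcont).sub continuousOn_const)
  have hint : IntervalIntegrable (fun t => Λ (m t) - (1/2) * Λ x₀)
      MeasureTheory.volume 0 h := by
    apply ContinuousOn.intervalIntegrable
    rwa [uIcc_of_le hh.le]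
  exact intervalIntegral.intervalIntegral_pos_of_pos_on hint
    (fun t ht => hpos t ⟨ht.1.le, ht.2.le⟩) hh
end

section
/- Under the hypotheses of the multi-dimensional ODE Gaussian mixture scheme (b bounded, Λ = σσᵀ uniformly positive definite with σ₀² lower bound, Λ Lipschitz), there exists h₀ > 0 such that for h < h₀ the conditional second moment M₂ = E[‖X^{n+1} − xₙ‖² | Xⁿ = xₙ] satisfies M₂ ≤ 4‖Λ‖_tr · h, where ‖Λ‖_tr = sup_x tr(|Λ(x)|). -/
open Finset Matrix Set intervalIntegral


private lemma pi_sum_prod3 {d : ℕ} (f : Fin d → Fin 3 → ℝ) :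
    ∑ z : Fin d → Fin 3, ∏ k, f k (z k) = ∏ k, ∑ c, f k c := by
  rw [Finset.prod_univ_sum, Fintype.piFinset_univ]

private lemma orth_sum {d : ℕ} (v : Fin d → Fin d → ℝ)
    (hv : ∀ i j, v i ⬝ᵥ v j = if i = j then 1 else 0) (c : Fin d → ℝ) :
    ∑ i, (∑ k, c k * v k i) ^ 2 = ∑ k, c k ^ 2 := by
  have key : ∀ i : Fin d, (∑ k, c k * v k i) ^ 2
      = ∑ k, ∑ l, (c k * v k i) * (c l * v l i) := by
    intro i; rw [sq, Finset.sum_mul_sum]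
  simp only [key]
  rw [Finset.sum_comm]
  have h3 : ∀ k : Fin d, (∑ i, ∑ l, (c k * v k i) * (c l * v l i)) = c k ^ 2 := by
    intro k
    rw [Finset.sum_comm]
    have h2 : ∀ l : Fin d, (∑ i, (c k * v k i) * (c l * v l i))
        = (c k * c l) * (v k ⬝ᵥ v l) := by
      intro l
      simp only [dotProduct, Finset.mul_sum]
      exact Finset.sum_congr rfl fun i _ => by ring
    simp only [h2, hv]
    simp [Finset.sum_ite_eq, sq]
  simp only [h3]

private lemma lam_comp_cont {d : ℕ} (Λ : (Fin d → ℝ) → Matrix (Fin d) (Fin d) ℝ) (L : ℝ)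
    (hΛlip : ∀ x y i j, |Λ x i j - Λ y i j| ≤ L * Real.sqrt (∑ k, (x k - y k) ^ 2))
    (i j : Fin d) : Continuous fun x => Λ x i j := by
  rw [continuous_iff_continuousAt]
  intro x
  have hc : Continuous fun y : Fin d → ℝ => L * Real.sqrt (∑ k, (y k - x k) ^ 2) := by
    fun_prop
  have hg : Filter.Tendsto (fun y => L * Real.sqrt (∑ k, (y k - x k) ^ 2)) (nhds x) (nhds 0) := by
    have := hc.tendsto x
    simpa using this
  have h0 : Filter.Tendsto (fun y => Λ y i j - Λ x i j) (nhds x) (nhds 0) :=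
    squeeze_zero_norm (fun y => by
      simpa [Real.norm_eq_abs] using hΛlip y x i j) hg
  have := h0.add_const (Λ x i j)
  simpa [ContinuousAt] using this

/-- One-step second moment bound `M₂ ≤ 4‖Λ‖_tr h` for the multi-dimensional
ODE Gaussian mixture scheme, for all sufficiently small step sizes `h`.
The mixture has beams indexed by `z : Fin d → Fin 3` (coding `{-1,0,1}^d`),
with weights `wₚ`, beam centers `m_z` flowing along `ṁ = b(m)` from the
shifted initial points, and covariances `S_z(h) = ∫₀ʰ (Λ(m_z(t)) − Λ(xₙ)/2) dt`;
`M₂ = ∑_z w_z (tr S_z(h) + ‖m_z(h) − xₙ‖²)`. -/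
theorem mixture_one_step_second_moment_bound
    (d : ℕ) (b : (Fin d → ℝ) → (Fin d → ℝ))
    (Λ : (Fin d → ℝ) → Matrix (Fin d) (Fin d) ℝ)
    (B K σ₀ L : ℝ) (hB : 0 ≤ B) (hK : 0 < K) (hσ₀ : 0 < σ₀) (hL : 0 ≤ L)
    (hbB : ∀ x, Real.sqrt (∑ i, (b x i) ^ 2) ≤ B)
    (hΛpos : ∀ x, (Λ x).PosDef)
    (hΛlow : ∀ x (v : Fin d → ℝ), σ₀ ^ 2 * (v ⬝ᵥ v) ≤ v ⬝ᵥ (Λ x).mulVec v)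
    (hΛtr : ∀ x, (∑ i, Λ x i i) ≤ K)
    (hΛlip : ∀ x y i j, |Λ x i j - Λ y i j| ≤ L * Real.sqrt (∑ k, (x k - y k) ^ 2)) :
    ∃ h₀ > (0 : ℝ), ∀ h, 0 < h → h < h₀ →
      ∀ (xₙ : Fin d → ℝ) (lam : Fin d → ℝ) (v : Fin d → (Fin d → ℝ)),
        (∀ i, 0 ≤ lam i) →
        (∀ i j, v i ⬝ᵥ v j = if i = j then 1 else 0) →
        (∀ i j, Λ xₙ i j = ∑ k, lam k * v k i * v k j) →
        ∀ (m : (Fin d → Fin 3) → ℝ → (Fin d → ℝ))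
          (S : (Fin d → Fin 3) → Matrix (Fin d) (Fin d) ℝ),
          (∀ z i, m z 0 i = xₙ i
            + ∑ k, (![(-1 : ℝ), 0, 1] (z k)) * Real.sqrt ((3/2) * lam k * h) * v k i) →
          (∀ z t, t ∈ Icc (0 : ℝ) h → HasDerivAt (m z) (b (m z t)) t) →
          (∀ z i j, S z i j = ∫ t in (0:ℝ)..h, (Λ (m z t) i j - (1/2) * Λ xₙ i j)) →
          (∑ z : Fin d → Fin 3, (∏ k, (![(1:ℝ)/6, 2/3, 1/6]) (z k)) *
              ((∑ i, S z i i) + ∑ i, (m z h i - xₙ i) ^ 2))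
            ≤ 4 * K * h := by
  refine ⟨K / ((d : ℝ) * B ^ 2 + 1), by positivity, ?_⟩
  intro h hh hh0 xₙ lam v hlam hv hdec m S hm0 hmd hS
  have hhK : h * ((d : ℝ) * B ^ 2 + 1) < K := (lt_div_iff₀ (by positivity)).mp hh0
  -- weights
  have hwnn : ∀ c : Fin 3, 0 ≤ ![(1:ℝ)/6, 2/3, 1/6] c := by
    intro c; fin_cases c <;> norm_num
  have hwz : ∀ z : Fin d → Fin 3, 0 ≤ ∏ k, ![(1:ℝ)/6, 2/3, 1/6] (z k) :=
    fun z => Finset.prod_nonneg fun k _ => hwnn _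
  have hw1 : ∑ z : Fin d → Fin 3, ∏ k, ![(1:ℝ)/6, 2/3, 1/6] (z k) = 1 := by
    rw [pi_sum_prod3]
    have h1 : ∀ k : Fin d, (∑ c, ![(1:ℝ)/6, 2/3, 1/6] c) = 1 := by
      intro k; rw [Fin.sum_univ_three]; show (1:ℝ)/6 + 2/3 + 1/6 = 1; norm_num
    rw [Finset.prod_congr rfl fun k _ => h1 k, Finset.prod_const_one]
  have hwk : ∀ k₀ : Fin d, ∑ z : Fin d → Fin 3,
      (∏ k, ![(1:ℝ)/6, 2/3, 1/6] (z k)) * (![(-1:ℝ), 0, 1] (z k₀)) ^ 2 = 1/3 := by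
    intro k₀
    have h1 : ∀ z : Fin d → Fin 3,
        (∏ k, ![(1:ℝ)/6, 2/3, 1/6] (z k)) * (![(-1:ℝ), 0, 1] (z k₀)) ^ 2
        = ∏ k, (![(1:ℝ)/6, 2/3, 1/6] (z k) *
            (if k = k₀ then (![(-1:ℝ), 0, 1] (z k)) ^ 2 else 1)) := by
      intro z
      rw [Finset.prod_mul_distrib, Finset.prod_ite_eq']
      simp
    simp only [h1]
    rw [pi_sum_prod3 (fun k c => ![(1:ℝ)/6, 2/3, 1/6] c *
      (if k = k₀ then (![(-1:ℝ), 0, 1] c) ^ 2 else 1))]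
    have h2 : ∀ k : Fin d, (∑ c : Fin 3, ![(1:ℝ)/6, 2/3, 1/6] c *
        (if k = k₀ then (![(-1:ℝ), 0, 1] c) ^ 2 else 1))
        = if k = k₀ then 1/3 else 1 := by
      intro k
      by_cases hk : k = k₀ <;> simp [hk, Fin.sum_univ_three] <;> norm_num
    rw [Finset.prod_congr rfl fun k _ => h2 k, Finset.prod_ite_eq']
    simp
  -- trace identity
  have htr : ∑ i, Λ xₙ i i = ∑ k, lam k := by
    simp only [hdec]
    rw [Finset.sum_comm]
    refine Finset.sum_congr rfl fun k _ => ?_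
    have h1 : ∑ i, lam k * v k i * v k i = lam k * (v k ⬝ᵥ v k) := by
      simp only [dotProduct, Finset.mul_sum]
      exact Finset.sum_congr rfl fun i _ => by ring
    rw [h1, hv k k]; simp
  have hlamK : ∑ k, lam k ≤ K := htr ▸ hΛtr xₙ
  have hlampos : (0:ℝ) ≤ ∑ k, lam k := Finset.sum_nonneg fun k _ => hlam k
  -- continuity / integrability
  have hmc : ∀ z, ContinuousOn (m z) (Icc (0:ℝ) h) :=
    fun z t ht => ((hmd z t ht).continuousAt).continuousWithinAt
  have hcont : ∀ z (i j : Fin d),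
      ContinuousOn (fun t => Λ (m z t) i j - (1/2) * Λ xₙ i j) (Icc (0:ℝ) h) := by
    intro z i j
    exact ((lam_comp_cont Λ L hΛlip i j).comp_continuousOn (hmc z)).sub continuousOn_const
  have hci : ∀ z (i j : Fin d), IntervalIntegrable
      (fun t => Λ (m z t) i j - (1/2) * Λ xₙ i j) MeasureTheory.volume 0 h := by
    intro z i j
    apply ContinuousOn.intervalIntegrable
    rw [Set.uIcc_of_le hh.le]
    exact hcont z i j
  -- trace bound
  have hT : ∀ z, (∑ i, S z i i) ≤ K * h := by
    intro z
    have heq : (∑ i, S z i i)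
        = ∫ t in (0:ℝ)..h, ∑ i, (Λ (m z t) i i - (1/2) * Λ xₙ i i) := by
      rw [intervalIntegral.integral_finset_sum (fun i _ => hci z i i)]
      exact Finset.sum_congr rfl fun i _ => hS z i i
    rw [heq]
    have hint : IntervalIntegrable
        (fun t => ∑ i, (Λ (m z t) i i - (1/2) * Λ xₙ i i)) MeasureTheory.volume 0 h := by
      apply ContinuousOn.intervalIntegrable
      rw [Set.uIcc_of_le hh.le]
      exact continuousOn_finset_sum _ fun i _ => hcont z i i
    have hle : ∀ t ∈ Icc (0:ℝ) h,
        (∑ i, (Λ (m z t) i i - (1/2) * Λ xₙ i i)) ≤ K := by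
      intro t ht
      rw [Finset.sum_sub_distrib, ← Finset.mul_sum]
      have h1 := hΛtr (m z t)
      have h2 : (0:ℝ) ≤ ∑ i, Λ xₙ i i := htr ▸ hlampos
      linarith
    calc (∫ t in (0:ℝ)..h, ∑ i, (Λ (m z t) i i - (1/2) * Λ xₙ i i))
        ≤ ∫ _t in (0:ℝ)..h, (K:ℝ) :=
          intervalIntegral.integral_mono_on hh.le hint intervalIntegrable_const hle
      _ = K * h := by simp [mul_comm]
  -- drift displacement bound
  have hΔ : ∀ z (i : Fin d), |m z h i - m z 0 i| ≤ B * h := by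
    intro z i
    have hd : ∀ t ∈ Icc (0:ℝ) h,
        HasDerivWithinAt (fun t => m z t i) (b (m z t) i) (Icc (0:ℝ) h) t :=
      fun t ht => ((hasDerivAt_pi.mp (hmd z t ht)) i).hasDerivWithinAt
    have hbd : ∀ t ∈ Icc (0:ℝ) h, ‖b (m z t) i‖ ≤ B := by
      intro t _
      rw [Real.norm_eq_abs, ← Real.sqrt_sq_eq_abs]
      exact le_trans (Real.sqrt_le_sqrt (Finset.single_le_sum
        (f := fun j => (b (m z t) j) ^ 2) (fun j _ => sq_nonneg _)
        (Finset.mem_univ i))) (hbB _)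
    have := Convex.norm_image_sub_le_of_norm_hasDerivWithin_le hd hbd (convex_Icc 0 h)
      (Set.left_mem_Icc.mpr hh.le) (Set.right_mem_Icc.mpr hh.le)
    simpa [abs_of_pos hh] using this
  -- initial displacement identity
  have hDisp : ∀ z : Fin d → Fin 3, ∑ i, (m z 0 i - xₙ i) ^ 2
      = ∑ k, (![(-1:ℝ), 0, 1] (z k)) ^ 2 * ((3/2) * lam k * h) := by
    intro z
    have h1 : ∀ i, m z 0 i - xₙ i
        = ∑ k, (![(-1:ℝ), 0, 1] (z k) * Real.sqrt ((3/2) * lam k * h)) * v k i := by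
      intro i; rw [hm0 z i]; ring
    calc ∑ i, (m z 0 i - xₙ i) ^ 2
        = ∑ i, (∑ k, (![(-1:ℝ), 0, 1] (z k) * Real.sqrt ((3/2) * lam k * h)) * v k i) ^ 2 := by
          simp only [h1]
      _ = ∑ k, (![(-1:ℝ), 0, 1] (z k) * Real.sqrt ((3/2) * lam k * h)) ^ 2 := orth_sum v hv _
      _ = ∑ k, (![(-1:ℝ), 0, 1] (z k)) ^ 2 * ((3/2) * lam k * h) := by
          refine Finset.sum_congr rfl fun k _ => ?_
          rw [mul_pow, Real.sq_sqrt
            (mul_nonneg (mul_nonneg (by norm_num) (hlam k)) hh.le)]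
  have hE : ∑ z : Fin d → Fin 3, (∏ k, ![(1:ℝ)/6, 2/3, 1/6] (z k)) *
      (∑ i, (m z 0 i - xₙ i) ^ 2) = (h/2) * ∑ k, lam k := by
    simp only [hDisp]
    have h1 : ∀ z : Fin d → Fin 3,
        (∏ k, ![(1:ℝ)/6, 2/3, 1/6] (z k)) *
          (∑ k, (![(-1:ℝ), 0, 1] (z k)) ^ 2 * ((3/2) * lam k * h))
        = ∑ k, ((∏ j, ![(1:ℝ)/6, 2/3, 1/6] (z j)) * (![(-1:ℝ), 0, 1] (z k)) ^ 2)
            * ((3/2) * lam k * h) := by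
      intro z; rw [Finset.mul_sum]; exact Finset.sum_congr rfl fun k _ => by ring
    simp only [h1]
    rw [Finset.sum_comm]
    have h2 : ∀ k : Fin d, (∑ z : Fin d → Fin 3,
        ((∏ j, ![(1:ℝ)/6, 2/3, 1/6] (z j)) * (![(-1:ℝ), 0, 1] (z k)) ^ 2)
          * ((3/2) * lam k * h)) = (h/2) * lam k := by
      intro k
      rw [← Finset.sum_mul, hwk k]; ring
    rw [Finset.sum_congr rfl fun k _ => h2 k, ← Finset.mul_sum]
  -- endpoint displacement bound
  have hD : ∀ z : Fin d → Fin 3, (∑ i, (m z h i - xₙ i) ^ 2)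
      ≤ 2 * (d:ℝ) * B ^ 2 * h ^ 2 + 2 * (∑ i, (m z 0 i - xₙ i) ^ 2) := by
    intro z
    have h1 : ∀ i : Fin d, (m z h i - xₙ i) ^ 2
        ≤ 2 * (B * h) ^ 2 + 2 * (m z 0 i - xₙ i) ^ 2 := by
      intro i
      have h2 := hΔ z i
      have ha : (m z h i - m z 0 i) ^ 2 ≤ (B * h) ^ 2 := by
        have := abs_le.mp h2
        nlinarith [this.1, this.2]
      nlinarith [sq_nonneg ((m z h i - m z 0 i) - (m z 0 i - xₙ i))]
    calc ∑ i, (m z h i - xₙ i) ^ 2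
        ≤ ∑ i : Fin d, (2 * (B * h) ^ 2 + 2 * (m z 0 i - xₙ i) ^ 2) :=
          Finset.sum_le_sum fun i _ => h1 i
      _ = 2 * (d:ℝ) * B ^ 2 * h ^ 2 + 2 * (∑ i, (m z 0 i - xₙ i) ^ 2) := by
          rw [Finset.sum_add_distrib, Finset.sum_const, ← Finset.mul_sum]
          simp only [Finset.card_univ, Fintype.card_fin, nsmul_eq_mul]
          ring
  -- final assembly
  calc ∑ z : Fin d → Fin 3, (∏ k, ![(1:ℝ)/6, 2/3, 1/6] (z k)) *
        ((∑ i, S z i i) + ∑ i, (m z h i - xₙ i) ^ 2)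
      = (∑ z : Fin d → Fin 3, (∏ k, ![(1:ℝ)/6, 2/3, 1/6] (z k)) * (∑ i, S z i i))
        + ∑ z : Fin d → Fin 3, (∏ k, ![(1:ℝ)/6, 2/3, 1/6] (z k)) *
            (∑ i, (m z h i - xₙ i) ^ 2) := by
        rw [← Finset.sum_add_distrib]
        exact Finset.sum_congr rfl fun z _ => by ring
    _ ≤ (∑ z : Fin d → Fin 3, (∏ k, ![(1:ℝ)/6, 2/3, 1/6] (z k)) * (K * h))
        + ∑ z : Fin d → Fin 3, (∏ k, ![(1:ℝ)/6, 2/3, 1/6] (z k)) *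
            (2 * (d:ℝ) * B ^ 2 * h ^ 2 + 2 * (∑ i, (m z 0 i - xₙ i) ^ 2)) :=
        add_le_add
          (Finset.sum_le_sum fun z _ => mul_le_mul_of_nonneg_left (hT z) (hwz z))
          (Finset.sum_le_sum fun z _ => mul_le_mul_of_nonneg_left (hD z) (hwz z))
    _ = K * h + (2 * (d:ℝ) * B ^ 2 * h ^ 2 + 2 * ((h/2) * ∑ k, lam k)) := by
        have e1 : (∑ z : Fin d → Fin 3, (∏ k, ![(1:ℝ)/6, 2/3, 1/6] (z k)) * (K * h))
            = K * h := by rw [← Finset.sum_mul, hw1, one_mul]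
        have e2 : ∑ z : Fin d → Fin 3, (∏ k, ![(1:ℝ)/6, 2/3, 1/6] (z k)) *
            (2 * (d:ℝ) * B ^ 2 * h ^ 2 + 2 * (∑ i, (m z 0 i - xₙ i) ^ 2))
            = 2 * (d:ℝ) * B ^ 2 * h ^ 2 + 2 * ((h/2) * ∑ k, lam k) := by
          simp only [mul_add]
          rw [Finset.sum_add_distrib, ← Finset.sum_mul, hw1, one_mul]
          congr 1
          have h3 : ∀ z : Fin d → Fin 3,
              (∏ k, ![(1:ℝ)/6, 2/3, 1/6] (z k)) * (2 * (∑ i, (m z 0 i - xₙ i) ^ 2))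
              = 2 * ((∏ k, ![(1:ℝ)/6, 2/3, 1/6] (z k)) * (∑ i, (m z 0 i - xₙ i) ^ 2)) :=
            fun z => by ring
          simp only [h3]
          rw [← Finset.mul_sum, hE]
        rw [e1, e2]
    _ ≤ 4 * K * h := by
        nlinarith [mul_le_mul_of_nonneg_left hlamK hh.le,
          mul_lt_mul_of_pos_left hhK hh, mul_pos hh hh]
end

section
/- There exist no functions m₁, m₂, S₀, S₁ of x₀ such that, for every smooth test function φ, the Gaussian 𝒩(m(h), S(h)) with m(h) = x₀ + m₁h + (1/2)m₂h² + O(h³) and S(h) = S₀h + (1/2)S₁h² + O(h³) matches the semigroup expansion φ + hLφ + (h²/2)L²φ of a 1D diffusion with generator L = b∂ₓ + (1/2)Λ∂ₓₓ to order O(h³) at x₀, unless Λ'(x₀)Λ(x₀) = 0. Specifically, first-order matching forces m₁ = b(x₀) and S₀ = Λ(x₀), and then the coefficient of φ''' in the Gaussian expansion is (1/2)b(x₀)Λ(x₀) while in (1/2)L²φ it is (1/2)b(x₀)Λ(x₀) + (1/4)Λ(x₀)Λ'(x₀), and these disagree when Λ'(x₀)Λ(x₀) ≠ 0. -/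
/-- A single Gaussian cannot give weak second order for multiplicative noise:
matching the one-step Gaussian expansion with the semigroup expansion
`φ + hLφ + (h²/2)L²φ` as a polynomial identity in the derivative values
`(φ', φ'', φ''', φ⁽⁴⁾)` at `x₀` is impossible when `Λ(x₀)Λ'(x₀) ≠ 0`. -/
theorem no_single_gaussian_second_order
    (b b' b'' Λ Λ' Λ'' : ℝ) (hmult : Λ * Λ' ≠ 0) :
    ¬ ∃ m₁ m₂ S₀ S₁ : ℝ, ∀ p1 p2 p3 p4 : ℝ,
      (m₁ * p1 + (1/2) * S₀ * p2 = b * p1 + (1/2) * Λ * p2) ∧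
      ((1/2) * (p2 * m₁ ^ 2 + p1 * m₂)
          + (1/2) * ((1/2) * p2 * S₁ + p3 * m₁ * S₀) + (1/8) * p4 * S₀ ^ 2
        = (1/2) * (b * (b' * p1 + b * p2 + (1/2) * Λ' * p2 + (1/2) * Λ * p3)
            + (1/2) * Λ * (b'' * p1 + 2 * b' * p2 + b * p3
                + (1/2) * Λ'' * p2 + Λ' * p3 + (1/2) * Λ * p4))) := by
  rintro ⟨m₁, m₂, S₀, S₁, h⟩
  have h1 := (h 1 0 0 0).1
  have h2 := (h 0 1 0 0).1
  have hm : m₁ = b := by linarith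
  have hS : S₀ = Λ := by linarith
  have h3 := (h 0 0 1 0).2
  rw [hm, hS] at h3
  have : Λ * Λ' = 0 := by nlinarith
  exact hmult this
end

section
/- Fix orthonormal vectors v₁,…,v_d in ℝᵈ, positive reals λ₁,…,λ_d, γᵢ = 3/2, weights w⁰ = 2/3, w^{±1} = 1/6, and for z ∈ {-1,0,1}^d set y_z = x₀ + ∑ᵢ zᵢ√(γᵢλᵢh)vᵢ and w_z = ∏ᵢ w^{zᵢ}. Then for any φ ∈ C_b⁶(ℝᵈ), ∑_z w_z φ(y_z) = φ(x₀) + ∑ᵢ (1/6)Dᵢ²φ(x₀)γᵢλᵢh + (1/2)∑_{i≠j}(1/36)γᵢγⱼDᵢ²Dⱼ²φ(x₀)λᵢλⱼh² + (1/12)∑ᵢ(1/6)γᵢ²Dᵢ⁴φ(x₀)λᵢ²h² + O(h³), where Dᵢ denotes the directional derivative along vᵢ and the O(h³) constant depends only on ‖φ‖_{C⁶} and the λᵢ. -/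
open Finset Matrix

section LinePart
variable {E : Type*} [NormedAddCommGroup E] [NormedSpace ℝ E]

private lemma line_hasDerivAt (x₀ u : E) (t : ℝ) :
    HasDerivAt (fun s : ℝ => x₀ + s • u) u t := by
  simpa using ((hasDerivAt_id t).smul_const u).const_add x₀

private lemma contDiff_line {n : WithTop ℕ∞} {f : E → ℝ} (hf : ContDiff ℝ n f) (x₀ u : E) :
    ContDiff ℝ n fun s : ℝ => f (x₀ + s • u) :=
  hf.comp (contDiff_const.add (contDiff_id.smul contDiff_const))

private lemma iteratedDeriv_line (n : ℕ) (f : E → ℝ) (hf : ContDiff ℝ (n : ℕ) f)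
    (x₀ u : E) (t : ℝ) :
    iteratedDeriv n (fun s : ℝ => f (x₀ + s • u)) t
      = iteratedFDeriv ℝ n f (x₀ + t • u) (fun _ => u) := by
  induction n generalizing f with
  | zero => simp
  | succ n IH =>
    have h1 : (1 : WithTop ℕ∞) ≤ ((n + 1 : ℕ) : WithTop ℕ∞) := by
      exact_mod_cast Nat.one_le_iff_ne_zero.2 (Nat.succ_ne_zero n)
    have hderiv : deriv (fun s : ℝ => f (x₀ + s • u))
        = fun s : ℝ => fderiv ℝ f (x₀ + s • u) u := by
      funext s
      exact ((hf.differentiable (by exact_mod_cast Nat.succ_ne_zero n)).differentiableAt.hasFDerivAt.comp_hasDerivAt s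
        (line_hasDerivAt x₀ u s)).deriv
    have hfd : ContDiff ℝ (n : ℕ) (fderiv ℝ f) := hf.fderiv_right (by exact_mod_cast le_rfl)
    have hψ : ContDiff ℝ (n : ℕ) (fun x => fderiv ℝ f x u) := hfd.clm_apply contDiff_const
    rw [iteratedDeriv_succ', hderiv, IH _ hψ]
    have hcomp : (fun x => fderiv ℝ f x u)
        = (ContinuousLinearMap.apply ℝ ℝ u) ∘ (fderiv ℝ f) := rfl
    rw [hcomp, ContinuousLinearMap.iteratedFDeriv_comp_left _ hfd.contDiffAt le_rfl,
      iteratedFDeriv_succ_apply_right]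
    rfl

private lemma iteratedDerivWithin_Icc_eq {g : ℝ → ℝ} (hg : ContDiff ℝ 6 g)
    {k : ℕ} (hk : k ≤ 6) {y : ℝ} (hy : y ∈ Set.Icc (0:ℝ) 1) :
    iteratedDerivWithin k g (Set.Icc 0 1) y = iteratedDeriv k g y := by
  have hT : HasFTaylorSeriesUpTo ((6:ℕ∞) : WithTop ℕ∞) g (ftaylorSeries ℝ g) :=
    contDiff_iff_ftaylorSeries.mp (by exact_mod_cast hg)
  have := (hT.hasFTaylorSeriesUpToOn (Set.Icc (0:ℝ) 1)).eq_iteratedFDerivWithin_of_uniqueDiffOn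
    (m := k) (by exact_mod_cast hk) (uniqueDiffOn_Icc one_pos) hy
  rw [iteratedDerivWithin_eq_iteratedFDerivWithin, iteratedDeriv_eq_iteratedFDeriv, ← this]
  rfl

/-- 5th order Taylor estimate for a `C⁶` function with bounded 6-th derivative. -/
private lemma taylor6 {f : E → ℝ} (hf : ContDiff ℝ 6 f) {M : ℝ}
    (hM : ∀ x, ‖iteratedFDeriv ℝ 6 f x‖ ≤ M) (x₀ u : E) :
    |f (x₀ + u) - ∑ k ∈ Finset.range 6,
        ((k.factorial : ℝ))⁻¹ * iteratedFDeriv ℝ k f x₀ (fun _ => u)|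
      ≤ M * ‖u‖ ^ 6 / 120 := by
  set g : ℝ → ℝ := fun s => f (x₀ + s • u) with hgdef
  have hg : ContDiff ℝ 6 g := contDiff_line hf x₀ u
  have hg' : ∀ (k : ℕ), k ≤ 6 → ∀ t : ℝ,
      iteratedDeriv k g t = iteratedFDeriv ℝ k f (x₀ + t • u) (fun _ => u) := by
    intro k hk t
    exact iteratedDeriv_line k f (hf.of_le (by exact_mod_cast hk)) x₀ u t
  have hC : ∀ y ∈ Set.Icc (0:ℝ) 1,
      ‖iteratedDerivWithin 6 g (Set.Icc 0 1) y‖ ≤ M * ‖u‖ ^ 6 := by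
    intro y hy
    rw [iteratedDerivWithin_Icc_eq hg le_rfl hy, hg' 6 le_rfl y]
    calc ‖iteratedFDeriv ℝ 6 f (x₀ + y • u) (fun _ => u)‖
        ≤ ‖iteratedFDeriv ℝ 6 f (x₀ + y • u)‖ * ∏ _i : Fin 6, ‖u‖ :=
          (iteratedFDeriv ℝ 6 f (x₀ + y • u)).le_opNorm _
      _ ≤ M * ‖u‖ ^ 6 := by
          rw [Finset.prod_const, Finset.card_univ, Fintype.card_fin]
          exact mul_le_mul_of_nonneg_right (hM _) (by positivity)
  have hb := taylor_mean_remainder_bound (a := 0) (b := 1) (x := 1) (n := 5)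
    zero_le_one (hg.of_le (by norm_num)).contDiffOn (Set.right_mem_Icc.2 zero_le_one) hC
  have e1 : g 1 = f (x₀ + u) := by simp [hgdef]
  have e2 : taylorWithinEval g 5 (Set.Icc 0 1) 0 1
      = ∑ k ∈ Finset.range 6, ((k.factorial : ℝ))⁻¹ * iteratedFDeriv ℝ k f x₀ (fun _ => u) := by
    rw [taylor_within_apply]
    refine Finset.sum_congr rfl fun k hk => ?_
    have hk6 : k ≤ 6 := by have := Finset.mem_range.mp hk; omega
    rw [iteratedDerivWithin_Icc_eq hg hk6 (Set.left_mem_Icc.2 zero_le_one), hg' k hk6 0]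
    simp [smul_eq_mul]
  rw [e1, e2] at hb
  have : M * ‖u‖ ^ 6 * (1 - 0) ^ (5 + 1) / (5:ℕ).factorial = M * ‖u‖ ^ 6 / 120 := by
    norm_num [Nat.factorial]
  rw [this] at hb
  exact hb

end LinePart

section SymPart
variable {E : Type*} [NormedAddCommGroup E] [NormedSpace ℝ E]

private lemma lift_eq {n : ℕ} {f : E → ℝ} (hf : ContDiff ℝ ((n+1 : ℕ) : WithTop ℕ∞) f)
    (a b : Fin n → E)
    (hab : ∀ y, iteratedFDeriv ℝ n f y a = iteratedFDeriv ℝ n f y b) (c : E) (x : E) :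
    iteratedFDeriv ℝ (n+1) f x (Fin.cons c a) = iteratedFDeriv ℝ (n+1) f x (Fin.cons c b) := by
  have hdiff : Differentiable ℝ (iteratedFDeriv ℝ n f) :=
    hf.differentiable_iteratedFDeriv (by exact_mod_cast Nat.lt_succ_self n)
  set A := ContinuousMultilinearMap.apply ℝ (fun _ : Fin n => E) ℝ a with hA
  set B := ContinuousMultilinearMap.apply ℝ (fun _ : Fin n => E) ℝ b with hB
  have h1 : HasFDerivAt (fun y => A (iteratedFDeriv ℝ n f y))
      (A.comp (fderiv ℝ (iteratedFDeriv ℝ n f) x)) x :=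
    A.hasFDerivAt.comp x (hdiff x).hasFDerivAt
  have h2 : HasFDerivAt (fun y => B (iteratedFDeriv ℝ n f y))
      (B.comp (fderiv ℝ (iteratedFDeriv ℝ n f) x)) x :=
    B.hasFDerivAt.comp x (hdiff x).hasFDerivAt
  have hfun : (fun y => A (iteratedFDeriv ℝ n f y)) = (fun y => B (iteratedFDeriv ℝ n f y)) :=
    funext fun y => hab y
  have h2' : HasFDerivAt (fun y => A (iteratedFDeriv ℝ n f y))
      (B.comp (fderiv ℝ (iteratedFDeriv ℝ n f) x)) x := hfun ▸ h2
  have heq := h1.unique h2'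
  have := congrArg (fun (L : E →L[ℝ] ℝ) => L c) heq
  simp only [ContinuousLinearMap.comp_apply] at this
  rw [iteratedFDeriv_succ_apply_left, iteratedFDeriv_succ_apply_left]
  simpa [Fin.tail_cons, Fin.cons_zero, hA, hB] using this

private lemma swap01 {n : ℕ} {f : E → ℝ} (hf : ContDiff ℝ ((n+2 : ℕ) : WithTop ℕ∞) f)
    (p q : E) (a : Fin n → E) (x : E) :
    iteratedFDeriv ℝ (n+2) f x (Fin.cons p (Fin.cons q a))
      = iteratedFDeriv ℝ (n+2) f x (Fin.cons q (Fin.cons p a)) := by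
  set G := iteratedFDeriv ℝ n f with hGdef
  have hG : ContDiff ℝ ((2:ℕ) : WithTop ℕ∞) G := hf.iteratedFDeriv_right (by
    rw [show ((n+2:ℕ) : WithTop ℕ∞) = ((2:ℕ):WithTop ℕ∞) + (n:ℕ) by exact_mod_cast by push_cast; ring])
  have hGdiff : Differentiable ℝ G := hG.differentiable (by simp)
  have hG'diff : Differentiable ℝ (fderiv ℝ G) :=
    (hG.fderiv_right (m := 1) (by exact_mod_cast le_rfl)).differentiable (by simp)
  -- step1 : evaluate (n+1)-th derivative through fderiv of G
  have step1 : ∀ (y : E) (c : E) (m : Fin n → E),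
      iteratedFDeriv ℝ (n+1) f y (Fin.cons c m) = fderiv ℝ G y c m := by
    intro y c m
    rw [iteratedFDeriv_succ_apply_left]
    simp [Fin.tail_cons, Fin.cons_zero, hGdef]
  -- the evaluation CLM
  have key : ∀ (c₁ c₂ : E),
      iteratedFDeriv ℝ (n+2) f x (Fin.cons c₁ (Fin.cons c₂ a))
        = fderiv ℝ (fderiv ℝ G) x c₁ c₂ a := by
    intro c₁ c₂
    have hdiff1 : Differentiable ℝ (iteratedFDeriv ℝ (n+1) f) :=
      hf.differentiable_iteratedFDeriv (by exact_mod_cast Nat.lt_succ_self (n+1))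
    set A := ContinuousMultilinearMap.apply ℝ (fun _ : Fin (n+1) => E) ℝ (Fin.cons c₂ a) with hA
    set B := (ContinuousMultilinearMap.apply ℝ (fun _ : Fin n => E) ℝ a).comp
      (ContinuousLinearMap.apply ℝ (ContinuousMultilinearMap ℝ (fun _ : Fin n => E) ℝ) c₂) with hB
    have e1 : iteratedFDeriv ℝ (n+2) f x (Fin.cons c₁ (Fin.cons c₂ a))
        = fderiv ℝ (iteratedFDeriv ℝ (n+1) f) x c₁ (Fin.cons c₂ a) := by
      rw [iteratedFDeriv_succ_apply_left]
      simp [Fin.tail_cons, Fin.cons_zero]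
    have h1 : HasFDerivAt (fun y => A (iteratedFDeriv ℝ (n+1) f y))
        (A.comp (fderiv ℝ (iteratedFDeriv ℝ (n+1) f) x)) x :=
      by exact A.hasFDerivAt.comp x (hdiff1 x).hasFDerivAt
    have h2 : HasFDerivAt (fun y => B (fderiv ℝ G y))
        (B.comp (fderiv ℝ (fderiv ℝ G) x)) x :=
      by exact HasFDerivAt.comp x (g := ⇑B) B.hasFDerivAt (hG'diff x).hasFDerivAt
    have hfun : (fun y => A (iteratedFDeriv ℝ (n+1) f y)) = (fun y => B (fderiv ℝ G y)) := by
      funext y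
      simp only [hA, hB, ContinuousMultilinearMap.apply_apply, ContinuousLinearMap.comp_apply,
        ContinuousLinearMap.apply_apply]
      exact step1 y c₂ a
    have h1' : HasFDerivAt (fun y => B (fderiv ℝ G y))
        (A.comp (fderiv ℝ (iteratedFDeriv ℝ (n+1) f) x)) x := hfun ▸ h1
    have heq := h1'.unique h2
    have := congrArg (fun (L : E →L[ℝ] ℝ) => L c₁) heq
    simp only [ContinuousLinearMap.comp_apply] at this
    rw [e1]
    simpa [hA, hB] using this
  rw [key p q, key q p]
  have hsym := second_derivative_symmetric (f := G) (f' := fderiv ℝ G)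
    (f'' := fderiv ℝ (fderiv ℝ G) x) (x := x)
    (fun y => (hGdiff y).hasFDerivAt) (hG'diff x).hasFDerivAt p q
  rw [hsym]

private lemma sym4_a {f : E → ℝ} (hf : ContDiff ℝ 6 f) (p q : E) (x : E) :
    iteratedFDeriv ℝ 4 f x ![p, q, p, q] = iteratedFDeriv ℝ 4 f x ![p, p, q, q] := by
  have hf4 : ContDiff ℝ ((4:ℕ) : WithTop ℕ∞) f := hf.of_le (by exact_mod_cast by norm_num)
  have hf3 : ContDiff ℝ ((3:ℕ) : WithTop ℕ∞) f := hf.of_le (by exact_mod_cast by norm_num)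
  have hab : ∀ y, iteratedFDeriv ℝ 3 f y ![q, p, q] = iteratedFDeriv ℝ 3 f y ![p, q, q] := by
    intro y
    exact swap01 (n := 1) hf3 q p ![q] y
  exact lift_eq (n := 3) hf4 ![q, p, q] ![p, q, q] hab p x

private lemma sym4_b {f : E → ℝ} (hf : ContDiff ℝ 6 f) (p q : E) (x : E) :
    iteratedFDeriv ℝ 4 f x ![p, q, q, p] = iteratedFDeriv ℝ 4 f x ![p, q, p, q] := by
  have hf4 : ContDiff ℝ ((4:ℕ) : WithTop ℕ∞) f := hf.of_le (by exact_mod_cast by norm_num)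
  have hf3 : ContDiff ℝ ((3:ℕ) : WithTop ℕ∞) f := hf.of_le (by exact_mod_cast by norm_num)
  have hf2 : ContDiff ℝ ((2:ℕ) : WithTop ℕ∞) f := hf.of_le (by exact_mod_cast by norm_num)
  have hab0 : ∀ y, iteratedFDeriv ℝ 2 f y ![q, p] = iteratedFDeriv ℝ 2 f y ![p, q] := by
    intro y
    exact swap01 (n := 0) hf2 q p ![] y
  have hab : ∀ y, iteratedFDeriv ℝ 3 f y ![q, q, p] = iteratedFDeriv ℝ 3 f y ![q, p, q] := by
    intro y
    exact lift_eq (n := 2) hf3 ![q, p] ![p, q] hab0 q y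
  exact lift_eq (n := 3) hf4 ![q, q, p] ![q, p, q] hab p x

end SymPart

namespace BeamAux

noncomputable def w3 : Fin 3 → ℝ := ![1/6, 2/3, 1/6]
noncomputable def z3 : Fin 3 → ℝ := ![-1, 0, 1]

noncomputable def mval : ℕ → ℝ := fun n => if n = 0 then 1 else if Odd n then 0 else 1/3

lemma mval_zero : mval 0 = 1 := by norm_num [mval]
lemma mval_two : mval 2 = 1/3 := by norm_num [mval, Nat.odd_iff]
lemma mval_four : mval 4 = 1/3 := by norm_num [mval, Nat.odd_iff]
lemma mval_odd {n : ℕ} (hn : Odd n) : mval n = 0 := by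
  have h0 : n ≠ 0 := by rcases hn with ⟨k, rfl⟩; omega
  simp [mval, h0, hn]

lemma mom (n : ℕ) : ∑ c : Fin 3, w3 c * z3 c ^ n = mval n := by
  have : ∑ c : Fin 3, w3 c * z3 c ^ n
      = 1/6 * (-1:ℝ)^n + 2/3 * (0:ℝ)^n + 1/6 * (1:ℝ)^n := by
    rw [Fin.sum_univ_three]; norm_num [w3, z3, Matrix.cons_val_two, Matrix.tail_cons, Matrix.head_cons]
  rw [this]
  rcases Nat.eq_zero_or_pos n with rfl | hn
  · norm_num [mval]
  · rcases Nat.even_or_odd n with he | ho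
    · rw [he.neg_one_pow, zero_pow (by omega), one_pow]
      have : ¬ Odd n := by simpa [Nat.not_odd_iff_even] using he
      have hn' : n ≠ 0 := by omega
      norm_num [mval, this, hn']
    · rw [ho.neg_one_pow, zero_pow (by omega), one_pow, mval_odd ho]
      ring

variable {d k : ℕ}

def cnt (r : Fin k → Fin d) (i : Fin d) : ℕ := ∑ m, if r m = i then 1 else 0

lemma cnt_sum (r : Fin k → Fin d) : ∑ i, cnt r i = k := by
  unfold cnt
  rw [Finset.sum_comm]
  simp [Finset.sum_ite_eq]

lemma prod_z_pow (x : Fin d → ℝ) (r : Fin k → Fin d) :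
    ∏ m, x (r m) = ∏ i, x i ^ cnt r i := by
  unfold cnt
  have : ∀ i : Fin d, x i ^ (∑ m, if r m = i then 1 else 0)
      = ∏ m, x i ^ (if r m = i then 1 else 0) := fun i =>
    (Finset.prod_pow_eq_pow_sum _ _ _).symm
  simp_rw [this]
  rw [Finset.prod_comm]
  refine Finset.prod_congr rfl fun m _ => ?_
  have : ∀ i : Fin d, x i ^ (if r m = i then 1 else 0) = if r m = i then x i else 1 := by
    intro i; split_ifs <;> simp
  simp_rw [this]
  simp [Finset.prod_ite_eq]

/-- Key factorization: weighted sum over all `z` of a product of powers. -/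
lemma wsum_pow (e : Fin d → ℕ) :
    ∑ z : Fin d → Fin 3, (∏ i, w3 (z i)) * ∏ i, z3 (z i) ^ e i = ∏ i, mval (e i) := by
  have h1 : ∀ z : Fin d → Fin 3,
      (∏ i, w3 (z i)) * ∏ i, z3 (z i) ^ e i = ∏ i, (w3 (z i) * z3 (z i) ^ e i) := by
    intro z; rw [Finset.prod_mul_distrib]
  simp_rw [h1]
  rw [← Fintype.prod_sum (fun (i : Fin d) (c : Fin 3) => w3 c * z3 c ^ e i)]
  exact Finset.prod_congr rfl fun i _ => mom (e i)

lemma wsum_one : ∑ z : Fin d → Fin 3, (∏ i, w3 (z i)) = 1 := by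
  have := wsum_pow (d := d) (fun _ => 0)
  simpa [mval_zero] using this

lemma wsum_prod (r : Fin k → Fin d) :
    ∑ z : Fin d → Fin 3, (∏ i, w3 (z i)) * (∏ m, z3 (z (r m)))
      = ∏ i, mval (cnt r i) := by
  have h1 : ∀ z : Fin d → Fin 3, ∏ m, z3 (z (r m)) = ∏ i, z3 (z i) ^ cnt r i := fun z =>
    prod_z_pow (fun i => z3 (z i)) r
  simp_rw [h1]
  exact wsum_pow _

lemma mu_odd (hk : Odd k) (r : Fin k → Fin d) : ∏ i, mval (cnt r i) = 0 := by
  have hne : ¬ ∀ i ∈ Finset.univ, 2 ∣ cnt r i := by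
    intro hall
    have h2 : 2 ∣ ∑ i, cnt r i := Finset.dvd_sum hall
    rw [cnt_sum] at h2
    rw [Nat.odd_iff] at hk
    omega
  push_neg at hne
  obtain ⟨i, _, hodd⟩ := hne
  exact Finset.prod_eq_zero (Finset.mem_univ i) (mval_odd (Nat.odd_iff.2 (by omega)))

lemma cnt_two (r : Fin 2 → Fin d) (i : Fin d) :
    cnt r i = (if r 0 = i then 1 else 0) + (if r 1 = i then 1 else 0) := by
  unfold cnt; exact Fin.sum_univ_two _

lemma cnt_four (r : Fin 4 → Fin d) (i : Fin d) :
    cnt r i = (if r 0 = i then 1 else 0) + (if r 1 = i then 1 else 0)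
      + (if r 2 = i then 1 else 0) + (if r 3 = i then 1 else 0) := by
  unfold cnt; exact Fin.sum_univ_four _

private lemma prod_single (p : Fin d) (f : Fin d → ℝ) (hf : ∀ i, i ≠ p → f i = 1) :
    ∏ i, f i = f p :=
  Finset.prod_eq_single p (fun b _ hb => hf b hb) (fun h => absurd (Finset.mem_univ p) h)

private lemma prod_pair {p q : Fin d} (hpq : p ≠ q) (f : Fin d → ℝ)
    (hf : ∀ i, i ≠ p → i ≠ q → f i = 1) : ∏ i, f i = f p * f q := by
  have h1 : ∏ i ∈ ({p, q} : Finset (Fin d)), f i = ∏ i, f i := by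
    refine Finset.prod_subset (Finset.subset_univ _) fun x _ hx => ?_
    simp only [Finset.mem_insert, Finset.mem_singleton, not_or] at hx
    exact hf x hx.1 hx.2
  rw [← h1, Finset.prod_pair hpq]

lemma mu2 (r : Fin 2 → Fin d) :
    ∏ i, mval (cnt r i) = if r 0 = r 1 then 1/3 else 0 := by
  by_cases h : r 0 = r 1
  · rw [if_pos h]
    rw [prod_single (r 0) _ (fun i hi => ?_)]
    · rw [cnt_two, if_pos rfl, if_pos h.symm]; exact mval_two
    · rw [cnt_two, if_neg (fun e => hi e.symm), if_neg (fun e => hi (h ▸ e).symm)]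
      exact mval_zero
  · rw [if_neg h]
    refine Finset.prod_eq_zero (Finset.mem_univ (r 0)) ?_
    rw [cnt_two, if_pos rfl, if_neg (fun e => h e.symm)]
    exact mval_odd (by norm_num)

lemma mu4 (r : Fin 4 → Fin d) :
    ∏ i, mval (cnt r i) = (1/9) *
      ((if r 0 = r 1 then (1:ℝ) else 0) * (if r 2 = r 3 then (1:ℝ) else 0)
      + (if r 0 = r 2 then (1:ℝ) else 0) * (if r 1 = r 3 then (1:ℝ) else 0)
      + (if r 0 = r 3 then (1:ℝ) else 0) * (if r 1 = r 2 then (1:ℝ) else 0)) := by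
  by_cases h01 : r 0 = r 1
  · by_cases h23 : r 2 = r 3
    · by_cases h02 : r 0 = r 2
      · -- all four equal
        have h03 : r 0 = r 3 := h02.trans h23
        have h13 : r 1 = r 3 := h01.symm.trans h03
        have h12 : r 1 = r 2 := h01.symm.trans h02
        have hside : ∀ i, i ≠ r 0 → mval (cnt r i) = 1 := by
          intro i hi
          rw [cnt_four, if_neg (fun e => hi e.symm), if_neg (fun e => hi (h01.trans e).symm),
            if_neg (fun e => hi (h02.trans e).symm), if_neg (fun e => hi (h03.trans e).symm)]
          simpa using mval_zero
        rw [prod_single (r 0) _ hside, cnt_four, if_pos rfl, if_pos h01.symm,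
          if_pos h02.symm, if_pos h03.symm, if_pos h01, if_pos h23, if_pos h02,
          if_pos h13, if_pos h03, if_pos h12]
        norm_num [mval_four]
      · -- pattern (0,1) (2,3)
        have hside : ∀ i, i ≠ r 0 → i ≠ r 2 → mval (cnt r i) = 1 := by
          intro i hi1 hi2
          rw [cnt_four, if_neg (fun e => hi1 e.symm), if_neg (fun e => hi1 (h01.trans e).symm),
            if_neg (fun e => hi2 e.symm), if_neg (fun e => hi2 (h23.trans e).symm)]
          simpa using mval_zero
        rw [prod_pair h02 _ hside, cnt_four, if_pos rfl, if_pos h01.symm,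
          if_neg (fun e => h02 e.symm), if_neg (fun e => h02 (h23.trans e).symm),
          cnt_four, if_neg h02, if_neg (fun e => h02 (h01.trans e)), if_pos rfl,
          if_pos h23.symm, if_pos h01, if_pos h23, if_neg h02,
          if_neg (fun e => h02 ((h01.trans e).trans h23.symm)),
          if_neg (fun e => h02 (e.trans h23.symm)), if_neg (fun e => h02 (h01.trans e))]
        norm_num [mval_two]
    · -- h01, ¬h23 : zero
      by_cases h02 : r 0 = r 2
      · have hL : ∏ i, mval (cnt r i) = 0 := by
          refine Finset.prod_eq_zero (Finset.mem_univ (r 2)) ?_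
          rw [cnt_four, if_pos h02, if_pos (h01.symm.trans h02), if_pos rfl,
            if_neg (fun e => h23 e.symm)]
          exact mval_odd (by decide)
        rw [hL, if_neg h23, if_neg (fun e : r 1 = r 3 => h23 (h02.symm.trans (h01.trans e))),
          if_neg (fun e : r 0 = r 3 => h23 (h02.symm.trans e))]
        ring
      · have hL : ∏ i, mval (cnt r i) = 0 := by
          refine Finset.prod_eq_zero (Finset.mem_univ (r 2)) ?_
          rw [cnt_four, if_neg h02, if_neg (fun e => h02 (h01.trans e)), if_pos rfl,
            if_neg (fun e => h23 e.symm)]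
          exact mval_odd (by decide)
        rw [hL, if_neg h23, if_neg h02, if_neg (fun e : r 1 = r 2 => h02 (h01.trans e))]
        ring
  · by_cases h23 : r 2 = r 3
    · by_cases h02 : r 0 = r 2
      · have hL : ∏ i, mval (cnt r i) = 0 := by
          refine Finset.prod_eq_zero (Finset.mem_univ (r 0)) ?_
          rw [cnt_four, if_pos rfl, if_neg (fun e => h01 e.symm), if_pos h02.symm,
            if_pos (h23.symm.trans h02.symm)]
          exact mval_odd (by decide)
        rw [hL, if_neg h01,
          if_neg (fun e : r 1 = r 3 => h01 ((e.trans h23.symm).trans h02.symm).symm),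
          if_neg (fun e : r 1 = r 2 => h01 (e.trans h02.symm).symm)]
        ring
      · have hL : ∏ i, mval (cnt r i) = 0 := by
          refine Finset.prod_eq_zero (Finset.mem_univ (r 0)) ?_
          rw [cnt_four, if_pos rfl, if_neg (fun e => h01 e.symm),
            if_neg (fun e => h02 e.symm), if_neg (fun e : r 3 = r 0 => h02 (h23.trans e).symm)]
          exact mval_odd (by decide)
        rw [hL, if_neg h01, if_neg h02, if_neg (fun e : r 0 = r 3 => h02 (e.trans h23.symm))]
        ring
    · by_cases h02 : r 0 = r 2
      · by_cases h13 : r 1 = r 3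
        · have hside : ∀ i, i ≠ r 0 → i ≠ r 1 → mval (cnt r i) = 1 := by
            intro i hi1 hi2
            rw [cnt_four, if_neg (fun e => hi1 e.symm), if_neg (fun e => hi2 e.symm),
              if_neg (fun e => hi1 (h02.trans e).symm), if_neg (fun e => hi2 (h13.trans e).symm)]
            simpa using mval_zero
          rw [prod_pair h01 _ hside, cnt_four, if_pos rfl, if_neg (fun e => h01 e.symm),
            if_pos h02.symm, if_neg (fun e : r 3 = r 0 => h01 (h13.trans e).symm),
            cnt_four, if_neg h01, if_pos rfl, if_neg (fun e : r 2 = r 1 => h01 (h02.trans e)),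
            if_pos h13.symm, if_neg h01, if_pos h02, if_pos h13,
            if_neg (fun e : r 0 = r 3 => h01 (e.trans h13.symm))]
          norm_num [mval_two]
        · have hL : ∏ i, mval (cnt r i) = 0 := by
            refine Finset.prod_eq_zero (Finset.mem_univ (r 3)) ?_
            rw [cnt_four, if_neg (fun e : r 0 = r 3 => h23 (h02.symm.trans e)), if_neg h13,
              if_neg h23, if_pos rfl]
            exact mval_odd (by decide)
          rw [hL, if_neg h01, if_neg h13, if_neg (fun e : r 0 = r 3 => h23 (h02.symm.trans e))]
          ring
      · by_cases h03 : r 0 = r 3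
        · by_cases h12 : r 1 = r 2
          · have hside : ∀ i, i ≠ r 0 → i ≠ r 1 → mval (cnt r i) = 1 := by
              intro i hi1 hi2
              rw [cnt_four, if_neg (fun e => hi1 e.symm), if_neg (fun e => hi2 e.symm),
                if_neg (fun e => hi2 (h12.trans e).symm),
                if_neg (fun e => hi1 (h03.trans e).symm)]
              simpa using mval_zero
            rw [prod_pair h01 _ hside, cnt_four, if_pos rfl, if_neg (fun e => h01 e.symm),
              if_neg (fun e : r 2 = r 0 => h02 e.symm), if_pos h03.symm,
              cnt_four, if_neg h01, if_pos rfl, if_pos h12.symm,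
              if_neg (fun e : r 3 = r 1 => h01 (h03.trans e)), if_neg h01, if_neg h02,
              if_pos h03, if_pos h12]
            norm_num [mval_two]
          · have hL : ∏ i, mval (cnt r i) = 0 := by
              refine Finset.prod_eq_zero (Finset.mem_univ (r 2)) ?_
              rw [cnt_four, if_neg h02, if_neg h12, if_pos rfl, if_neg (fun e => h23 e.symm)]
              exact mval_odd (by decide)
            rw [hL, if_neg h01, if_neg h02, if_neg h12]
            ring
        · have hL : ∏ i, mval (cnt r i) = 0 := by
            refine Finset.prod_eq_zero (Finset.mem_univ (r 0)) ?_
            rw [cnt_four, if_pos rfl, if_neg (fun e => h01 e.symm),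
              if_neg (fun e => h02 e.symm), if_neg (fun e => h03 e.symm)]
            exact mval_odd (by decide)
          rw [hL, if_neg h01, if_neg h02, if_neg h03]
          ring
section Swap
variable {E : Type*} [NormedAddCommGroup E] [NormedSpace ℝ E]

lemma wsum_swap (k : ℕ) (T : ContinuousMultilinearMap ℝ (fun _ : Fin k => E) ℝ)
    (c : Fin d → ℝ) (v : Fin d → E) :
    ∑ z : Fin d → Fin 3, (∏ i, w3 (z i)) * T (fun _ => ∑ i, (z3 (z i) * c i) • v i)
      = ∑ r : Fin k → Fin d,
          (∏ i, mval (cnt r i)) * ((∏ m, c (r m)) * T (fun m => v (r m))) := by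
  have hz : ∀ z : Fin d → Fin 3, T (fun _ => ∑ i, (z3 (z i) * c i) • v i)
      = ∑ r : Fin k → Fin d,
          (∏ m, z3 (z (r m))) * ((∏ m, c (r m)) * T (fun m => v (r m))) := by
    intro z
    have h1 := T.toMultilinearMap.map_sum
      (g := fun (_ : Fin k) (j : Fin d) => (z3 (z j) * c j) • v j)
    have h1' : T (fun _ => ∑ i, (z3 (z i) * c i) • v i)
        = ∑ r : Fin k → Fin d, T (fun m => (z3 (z (r m)) * c (r m)) • v (r m)) := h1
    rw [h1']
    refine Finset.sum_congr rfl fun r _ => ?_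
    have h2 := T.toMultilinearMap.map_smul_univ
      (fun m => z3 (z (r m)) * c (r m)) (fun m => v (r m))
    have h2' : T (fun m => (z3 (z (r m)) * c (r m)) • v (r m))
        = (∏ m, z3 (z (r m)) * c (r m)) * T (fun m => v (r m)) := h2
    rw [h2', Finset.prod_mul_distrib]
    ring
  simp_rw [hz, Finset.mul_sum]
  rw [Finset.sum_comm]
  refine Finset.sum_congr rfl fun r _ => ?_
  rw [← wsum_prod r, Finset.sum_mul]
  refine Finset.sum_congr rfl fun z _ => ?_
  ring
end Swap

private def e2 {κ : Type*} : κ × κ ≃ (Fin 2 → κ) where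
  toFun p := ![p.1, p.2]
  invFun r := (r 0, r 1)
  left_inv p := rfl
  right_inv r := by funext m; fin_cases m <;> rfl

private def e4k {κ : Type*} : κ × κ × κ × κ ≃ (Fin 4 → κ) where
  toFun p := ![p.1, p.2.1, p.2.2.1, p.2.2.2]
  invFun r := (r 0, r 1, r 2, r 3)
  left_inv p := rfl
  right_inv r := by funext m; fin_cases m <;> rfl

private lemma collapse (g : Fin d → ℝ) (i : Fin d) :
    (∑ j, (if i = j then (1:ℝ) else 0) * g j) = g i := by
  simp [ite_mul]

lemma sum_eval2 (a : Fin d → ℝ) (F : (Fin 2 → Fin d) → ℝ) :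
    ∑ r : Fin 2 → Fin d, (∏ i, mval (cnt r i)) * ((∏ m, a (r m)) * F r)
      = ∑ i, (1/3) * ((a i * a i) * F ![i, i]) := by
  rw [← Equiv.sum_comp (e2 (κ := Fin d))
    (fun r => (∏ i, mval (cnt r i)) * ((∏ m, a (r m)) * F r)), Fintype.sum_prod_type]
  refine Finset.sum_congr rfl fun i _ => ?_
  have hterm : ∀ j : Fin d, (∏ t, mval (cnt (e2 (i, j)) t)) * ((∏ m, a (e2 (i, j) m)) * F (e2 (i, j)))
      = (if i = j then (1:ℝ) else 0) * ((1/3) * ((a i * a j) * F ![i, j])) := by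
    intro j
    have he : (e2 (i, j) : Fin 2 → Fin d) = ![i, j] := rfl
    rw [he, mu2, Fin.prod_univ_two]
    have h0 : (![i,j] : Fin 2 → Fin d) 0 = i := rfl
    have h1 : (![i,j] : Fin 2 → Fin d) 1 = j := rfl
    rw [h0, h1]
    split_ifs <;> ring
  simp_rw [hterm]
  rw [collapse]
lemma sum_eval4 (a : Fin d → ℝ) (F : (Fin 4 → Fin d) → ℝ)
    (hsym1 : ∀ i j, F ![i,j,i,j] = F ![i,i,j,j]) (hsym2 : ∀ i j, F ![i,j,j,i] = F ![i,i,j,j]) :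
    ∑ r : Fin 4 → Fin d, (∏ t, mval (cnt r t)) * ((∏ m, a (r m)) * F r)
      = (1/3) * ∑ i, ∑ j, (a i * a i * (a j * a j)) * F ![i,i,j,j] := by
  rw [← Equiv.sum_comp (e4k (κ := Fin d))
    (fun r => (∏ t, mval (cnt r t)) * ((∏ m, a (r m)) * F r))]
  rw [Fintype.sum_prod_type]
  simp_rw [Fintype.sum_prod_type]
  have hterm : ∀ i j k l : Fin d,
      (∏ t, mval (cnt (e4k (i, j, k, l)) t)) * ((∏ m, a (e4k (i, j, k, l) m)) * F (e4k (i, j, k, l)))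
      = ((if i = j then (1:ℝ) else 0) * (if k = l then (1:ℝ) else 0)
        + (if i = k then (1:ℝ) else 0) * (if j = l then (1:ℝ) else 0)
        + (if i = l then (1:ℝ) else 0) * (if j = k then (1:ℝ) else 0))
        * ((1/9) * ((a i * a j * (a k * a l)) * F ![i,j,k,l])) := by
    intro i j k l
    have he : (e4k (i, j, k, l) : Fin 4 → Fin d) = ![i, j, k, l] := rfl
    rw [he, mu4, Fin.prod_univ_four]
    have h0 : (![i,j,k,l] : Fin 4 → Fin d) 0 = i := rfl
    have h1 : (![i,j,k,l] : Fin 4 → Fin d) 1 = j := rfl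
    have h2 : (![i,j,k,l] : Fin 4 → Fin d) 2 = k := rfl
    have h3 : (![i,j,k,l] : Fin 4 → Fin d) 3 = l := rfl
    rw [h0, h1, h2, h3]
    ring
  simp_rw [hterm]
  -- key collapsing identity
  have key : ∀ Y : Fin d → Fin d → Fin d → Fin d → ℝ,
      (∑ i, ∑ j, ∑ k, ∑ l, ((if i = j then (1:ℝ) else 0) * (if k = l then (1:ℝ) else 0)
        + (if i = k then (1:ℝ) else 0) * (if j = l then (1:ℝ) else 0)
        + (if i = l then (1:ℝ) else 0) * (if j = k then (1:ℝ) else 0)) * Y i j k l)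
      = (∑ i, ∑ k, Y i i k k) + (∑ i, ∑ j, Y i j i j) + (∑ i, ∑ j, Y i j j i) := by
    intro Y
    have split : ∀ i j k l : Fin d,
        ((if i = j then (1:ℝ) else 0) * (if k = l then (1:ℝ) else 0)
        + (if i = k then (1:ℝ) else 0) * (if j = l then (1:ℝ) else 0)
        + (if i = l then (1:ℝ) else 0) * (if j = k then (1:ℝ) else 0)) * Y i j k l
        = (if i = j then (1:ℝ) else 0) * ((if k = l then (1:ℝ) else 0) * Y i j k l)
        + (if i = k then (1:ℝ) else 0) * ((if j = l then (1:ℝ) else 0) * Y i j k l)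
        + (if i = l then (1:ℝ) else 0) * ((if j = k then (1:ℝ) else 0) * Y i j k l) := by
      intro i j k l; ring
    simp_rw [split, Finset.sum_add_distrib]
    congr 1
    · congr 1
      · -- S1
        refine Finset.sum_congr rfl fun i _ => ?_
        have inner1 : ∀ j k : Fin d,
            (∑ l, (if i = j then (1:ℝ) else 0) * ((if k = l then (1:ℝ) else 0) * Y i j k l))
            = (if i = j then (1:ℝ) else 0) * Y i j k k := by
          intro j k; rw [← Finset.mul_sum, collapse]
        simp_rw [inner1]
        have inner2 : ∀ j : Fin d,
            (∑ k, (if i = j then (1:ℝ) else 0) * Y i j k k)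
            = (if i = j then (1:ℝ) else 0) * ∑ k, Y i j k k := by
          intro j; rw [← Finset.mul_sum]
        simp_rw [inner2]
        rw [collapse]
      · -- S2
        refine Finset.sum_congr rfl fun i _ => ?_
        refine Finset.sum_congr rfl fun j _ => ?_
        have inner1 : ∀ k : Fin d,
            (∑ l, (if i = k then (1:ℝ) else 0) * ((if j = l then (1:ℝ) else 0) * Y i j k l))
            = (if i = k then (1:ℝ) else 0) * Y i j k j := by
          intro k; rw [← Finset.mul_sum, collapse]
        simp_rw [inner1]
        rw [collapse]
    · -- S3
      refine Finset.sum_congr rfl fun i _ => ?_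
      refine Finset.sum_congr rfl fun j _ => ?_
      have inner1 : ∀ k : Fin d,
          (∑ l, (if i = l then (1:ℝ) else 0) * ((if j = k then (1:ℝ) else 0) * Y i j k l))
          = (if j = k then (1:ℝ) else 0) * Y i j k i := by
        intro k
        rw [collapse]
      simp_rw [inner1]
      rw [collapse]
  rw [key]
  simp_rw [hsym1, hsym2]
  rw [Finset.mul_sum]
  simp_rw [Finset.mul_sum]
  rw [← Finset.sum_add_distrib, ← Finset.sum_add_distrib]
  refine Finset.sum_congr rfl fun i _ => ?_
  rw [← Finset.sum_add_distrib, ← Finset.sum_add_distrib]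
  refine Finset.sum_congr rfl fun j _ => ?_
  ring
end BeamAux
/-- Lemma 4.2 of the paper: combinatorial Taylor expansion of the weighted sum
of a `C_b⁶` test function over the `3^d` beam initial points
`y_z = x₀ + ∑ᵢ zᵢ√(γᵢλᵢh)vᵢ`, `γᵢ = 3/2`, with weights
`w_z = ∏ᵢ w^{zᵢ}`, `w⁰ = 2/3`, `w^{±1} = 1/6`.  Here `Dᵢ` is the directional
derivative along `vᵢ`, expressed through iterated Fréchet derivatives. -/
theorem beam_taylor_expansion
    (d : ℕ) (v : Fin d → (Fin d → ℝ))
    (horth : ∀ i j, v i ⬝ᵥ v j = if i = j then 1 else 0)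
    (lam : Fin d → ℝ) (hlam : ∀ i, 0 < lam i)
    (φ : (Fin d → ℝ) → ℝ) (hφ : ContDiff ℝ 6 φ) (Mφ : ℝ)
    (hφb : ∀ k ≤ 6, ∀ x, ‖iteratedFDeriv ℝ k φ x‖ ≤ Mφ)
    (x₀ : Fin d → ℝ) :
    ∃ C : ℝ, 0 ≤ C ∧ ∀ h : ℝ, 0 < h →
      let γ : ℝ := 3/2
      let wfun : Fin 3 → ℝ := ![1/6, 2/3, 1/6]
      let zval : Fin 3 → ℝ := ![-1, 0, 1]
      let y : (Fin d → Fin 3) → (Fin d → ℝ) := fun z =>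
        x₀ + ∑ i, (zval (z i) * Real.sqrt (γ * lam i * h)) • v i
      let D2 : Fin d → ℝ := fun i => iteratedFDeriv ℝ 2 φ x₀ ![v i, v i]
      let D22 : Fin d → Fin d → ℝ := fun i j =>
        iteratedFDeriv ℝ 4 φ x₀ ![v i, v i, v j, v j]
      let D4 : Fin d → ℝ := fun i => iteratedFDeriv ℝ 4 φ x₀ ![v i, v i, v i, v i]
      |(∑ z : Fin d → Fin 3, (∏ i, wfun (z i)) * φ (y z))
          - (φ x₀ + (∑ i, (1/6) * D2 i * γ * lam i * h)
              + (1/2) * (∑ i, ∑ j, if i = j then 0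
                  else (1/36) * γ * γ * D22 i j * lam i * lam j * h ^ 2)
              + (1/12) * (∑ i, (1/6) * γ ^ 2 * D4 i * (lam i) ^ 2 * h ^ 2))|
        ≤ C * h ^ 3 := by
  classical
  have hM0 : 0 ≤ Mφ := le_trans (norm_nonneg _) (hφb 0 (by norm_num) x₀)
  set S : ℝ := ∑ i, Real.sqrt (3/2 * lam i) with hSdef
  have hS0 : 0 ≤ S := Finset.sum_nonneg fun i _ => Real.sqrt_nonneg _
  refine ⟨Mφ * S ^ 6 / 120, by positivity, ?_⟩
  intro h hpos
  intro γ wfun zval y D2 D22 D4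
  show |(∑ z : Fin d → Fin 3, (∏ i, BeamAux.w3 (z i))
        * φ (x₀ + ∑ i, (BeamAux.z3 (z i) * Real.sqrt (3/2 * lam i * h)) • v i))
      - (φ x₀ + (∑ i, (1/6) * iteratedFDeriv ℝ 2 φ x₀ ![v i, v i] * (3/2) * lam i * h)
          + (1/2) * (∑ i, ∑ j, if i = j then 0
              else (1/36) * (3/2) * (3/2) * iteratedFDeriv ℝ 4 φ x₀ ![v i, v i, v j, v j]
                * lam i * lam j * h ^ 2)
          + (1/12) * (∑ i, (1/6) * (3/2 : ℝ) ^ 2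
              * iteratedFDeriv ℝ 4 φ x₀ ![v i, v i, v i, v i] * (lam i) ^ 2 * h ^ 2))|
    ≤ Mφ * S ^ 6 / 120 * h ^ 3
  set a : Fin d → ℝ := fun i => Real.sqrt (3/2 * lam i * h) with hadef
  set u : (Fin d → Fin 3) → (Fin d → ℝ) := fun z => ∑ i, (BeamAux.z3 (z i) * a i) • v i
    with hudef
  set w : (Fin d → Fin 3) → ℝ := fun z => ∏ i, BeamAux.w3 (z i) with hwdef
  set Q : (Fin d → Fin 3) → ℝ := fun z => ∑ k ∈ Finset.range 6,
    ((k.factorial : ℝ))⁻¹ * iteratedFDeriv ℝ k φ x₀ (fun _ => u z) with hQdef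
  -- basic facts
  have hapos : ∀ i, (0:ℝ) ≤ 3/2 * lam i * h := fun i => by
    have := hlam i; positivity
  have ha2 : ∀ i, a i * a i = 3/2 * lam i * h := fun i => Real.mul_self_sqrt (hapos i)
  have ha0 : ∀ i, 0 ≤ a i := fun i => Real.sqrt_nonneg _
  have hw30 : ∀ c : Fin 3, 0 ≤ BeamAux.w3 c := by
    intro c; fin_cases c <;> norm_num [BeamAux.w3]
  have hw0 : ∀ z, 0 ≤ w z := fun z => Finset.prod_nonneg fun i _ => hw30 (z i)
  have hvnorm : ∀ i, ‖v i‖ ≤ 1 := by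
    intro i
    have h1 : ∑ m, v i m * v i m = 1 := by simpa [dotProduct] using horth i i
    refine (pi_norm_le_iff_of_nonneg zero_le_one).2 fun m => ?_
    rw [Real.norm_eq_abs, abs_le_one_iff_mul_self_le_one]
    calc v i m * v i m ≤ ∑ m', v i m' * v i m' :=
          Finset.single_le_sum (f := fun m' => v i m' * v i m')
            (fun m' _ => mul_self_nonneg _) (Finset.mem_univ m)
      _ = 1 := h1
  have hz1 : ∀ c : Fin 3, |BeamAux.z3 c| ≤ 1 := by
    intro c; fin_cases c <;> norm_num [BeamAux.z3]
  have hu6 : ∀ z, ‖u z‖ ^ 6 ≤ S ^ 6 * h ^ 3 := by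
    intro z
    have h1 : ‖u z‖ ≤ S * Real.sqrt h := by
      calc ‖u z‖ ≤ ∑ i, ‖(BeamAux.z3 (z i) * a i) • v i‖ := norm_sum_le _ _
        _ ≤ ∑ i, a i := by
            refine Finset.sum_le_sum fun i _ => ?_
            rw [norm_smul, Real.norm_eq_abs, abs_mul, abs_of_nonneg (Real.sqrt_nonneg _)]
            calc |BeamAux.z3 (z i)| * a i * ‖v i‖ ≤ 1 * a i * 1 := by
                  refine mul_le_mul (mul_le_mul_of_nonneg_right (hz1 _)
                    (ha0 i)) (hvnorm i) (norm_nonneg _) (mul_nonneg zero_le_one (ha0 i))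
              _ = a i := by ring
        _ = S * Real.sqrt h := by
            rw [hSdef, Finset.sum_mul]
            refine Finset.sum_congr rfl fun i _ => ?_
            rw [hadef]
            exact Real.sqrt_mul (by have := hlam i; positivity) h
    calc ‖u z‖ ^ 6 ≤ (S * Real.sqrt h) ^ 6 := by
          exact pow_le_pow_left₀ (norm_nonneg _) h1 6
      _ = S ^ 6 * h ^ 3 := by
          rw [mul_pow]
          congr 1
          rw [show (6:ℕ) = 2 * 3 from rfl, pow_mul, Real.sq_sqrt hpos.le]
  -- Taylor estimate for each z
  have htay : ∀ z, |φ (x₀ + u z) - Q z| ≤ Mφ * ‖u z‖ ^ 6 / 120 := fun z =>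
    taylor6 hφ (hφb 6 le_rfl) x₀ (u z)
  -- weighted sums of iterated derivatives
  have hWodd : ∀ k : ℕ, Odd k →
      (∑ z : Fin d → Fin 3, w z * iteratedFDeriv ℝ k φ x₀ (fun _ => u z)) = 0 := by
    intro k hk
    rw [hwdef]
    simp only [hudef]
    rw [BeamAux.wsum_swap k (iteratedFDeriv ℝ k φ x₀) a v]
    refine Finset.sum_eq_zero fun r _ => ?_
    rw [BeamAux.mu_odd hk r]
    ring
  have hW0 : (∑ z : Fin d → Fin 3, w z * iteratedFDeriv ℝ 0 φ x₀ (fun _ => u z)) = φ x₀ := by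
    have : ∀ z : Fin d → Fin 3, w z * iteratedFDeriv ℝ 0 φ x₀ (fun _ => u z) = w z * φ x₀ := by
      intro z; rw [iteratedFDeriv_zero_apply]
    simp_rw [this]
    rw [← Finset.sum_mul, hwdef, BeamAux.wsum_one, one_mul]
  have hW2 : (∑ z : Fin d → Fin 3, w z * iteratedFDeriv ℝ 2 φ x₀ (fun _ => u z))
      = ∑ i, (1/3) * ((a i * a i) * iteratedFDeriv ℝ 2 φ x₀ ![v i, v i]) := by
    rw [hwdef]
    simp only [hudef]
    rw [BeamAux.wsum_swap 2 (iteratedFDeriv ℝ 2 φ x₀) a v, BeamAux.sum_eval2 a _]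
    refine Finset.sum_congr rfl fun i _ => ?_
    have : (fun m => v ((![i, i] : Fin 2 → Fin d) m)) = ![v i, v i] := by
      funext m; fin_cases m <;> rfl
    rw [this]
  have hW4 : (∑ z : Fin d → Fin 3, w z * iteratedFDeriv ℝ 4 φ x₀ (fun _ => u z))
      = (1/3) * ∑ i, ∑ j, (a i * a i * (a j * a j))
          * iteratedFDeriv ℝ 4 φ x₀ ![v i, v i, v j, v j] := by
    rw [hwdef]
    simp only [hudef]
    rw [BeamAux.wsum_swap 4 (iteratedFDeriv ℝ 4 φ x₀) a v]
    have hmat : ∀ (i j k l : Fin d),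
        (fun m => v ((![i, j, k, l] : Fin 4 → Fin d) m)) = ![v i, v j, v k, v l] := by
      intro i j k l; funext m; fin_cases m <;> rfl
    have hsymA : ∀ i j : Fin d,
        iteratedFDeriv ℝ 4 φ x₀ (fun m => v ((![i, j, i, j] : Fin 4 → Fin d) m))
          = iteratedFDeriv ℝ 4 φ x₀ (fun m => v ((![i, i, j, j] : Fin 4 → Fin d) m)) := by
      intro i j
      rw [hmat, hmat]
      exact sym4_a hφ (v i) (v j) x₀
    have hsymB : ∀ i j : Fin d,
        iteratedFDeriv ℝ 4 φ x₀ (fun m => v ((![i, j, j, i] : Fin 4 → Fin d) m))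
          = iteratedFDeriv ℝ 4 φ x₀ (fun m => v ((![i, i, j, j] : Fin 4 → Fin d) m)) := by
      intro i j
      rw [hmat, hmat]
      exact (sym4_b hφ (v i) (v j) x₀).trans (sym4_a hφ (v i) (v j) x₀)
    rw [BeamAux.sum_eval4 a (fun r => iteratedFDeriv ℝ 4 φ x₀ (fun m => v (r m)))
      (fun i j => hsymA i j) (fun i j => hsymB i j)]
    congr 1
    refine Finset.sum_congr rfl fun i _ => Finset.sum_congr rfl fun j _ => ?_
    rw [hmat]
  -- the exact value of the weighted sum of Taylor polynomials
  have hsplit : ∀ (c : Fin d → Fin d → ℝ),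
      (∑ i, ∑ j, c i j) = (∑ i, ∑ j, if i = j then 0 else c i j) + ∑ i, c i i := by
    intro c
    rw [← Finset.sum_add_distrib]
    refine Finset.sum_congr rfl fun i _ => ?_
    have hpt : ∀ j, c i j = (if i = j then 0 else c i j) + (if i = j then c i j else 0) := by
      intro j; split_ifs <;> ring
    rw [Finset.sum_congr rfl fun j _ => hpt j, Finset.sum_add_distrib, Finset.sum_ite_eq]
    simp
  have hQsum : (∑ z : Fin d → Fin 3, w z * Q z)
      = φ x₀ + (1/2) * ∑ i, (1/3) * ((a i * a i) * iteratedFDeriv ℝ 2 φ x₀ ![v i, v i])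
        + (1/24) * ((1/3) * ∑ i, ∑ j, (a i * a i * (a j * a j))
            * iteratedFDeriv ℝ 4 φ x₀ ![v i, v i, v j, v j]) := by
    have hswap : (∑ z : Fin d → Fin 3, w z * Q z)
        = ∑ k ∈ Finset.range 6, ((k.factorial : ℝ))⁻¹
            * ∑ z : Fin d → Fin 3, w z * iteratedFDeriv ℝ k φ x₀ (fun _ => u z) := by
      rw [hQdef]
      simp_rw [Finset.mul_sum]
      rw [Finset.sum_comm]
      refine Finset.sum_congr rfl fun k _ => Finset.sum_congr rfl fun z _ => by ring
    rw [hswap]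
    rw [show Finset.range 6 = {0, 1, 2, 3, 4, 5} from rfl]
    rw [Finset.sum_insert (by decide), Finset.sum_insert (by decide),
      Finset.sum_insert (by decide), Finset.sum_insert (by decide),
      Finset.sum_insert (by decide), Finset.sum_singleton]
    rw [hW0, hW2, hW4, hWodd 1 (by decide), hWodd 3 (by decide), hWodd 5 (by decide)]
    norm_num [Nat.factorial]
    ring
  -- final computation of the target
  have htarget : (φ x₀ + (∑ i, (1/6) * iteratedFDeriv ℝ 2 φ x₀ ![v i, v i] * (3/2) * lam i * h)
          + (1/2) * (∑ i, ∑ j, if i = j then 0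
              else (1/36) * (3/2) * (3/2) * iteratedFDeriv ℝ 4 φ x₀ ![v i, v i, v j, v j]
                * lam i * lam j * h ^ 2)
          + (1/12) * (∑ i, (1/6) * (3/2 : ℝ) ^ 2
              * iteratedFDeriv ℝ 4 φ x₀ ![v i, v i, v i, v i] * (lam i) ^ 2 * h ^ 2))
      = ∑ z : Fin d → Fin 3, w z * Q z := by
    rw [hQsum]
    have e2 : (∑ i, (1/6) * iteratedFDeriv ℝ 2 φ x₀ ![v i, v i] * (3/2) * lam i * h)
        = (1/2) * ∑ i, (1/3) * ((a i * a i) * iteratedFDeriv ℝ 2 φ x₀ ![v i, v i]) := by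
      rw [Finset.mul_sum]
      refine Finset.sum_congr rfl fun i _ => ?_
      rw [ha2 i]
      ring
    have e4 : (1/2) * (∑ i, ∑ j, if i = j then 0
              else (1/36) * (3/2) * (3/2) * iteratedFDeriv ℝ 4 φ x₀ ![v i, v i, v j, v j]
                * lam i * lam j * h ^ 2)
          + (1/12) * (∑ i, (1/6) * (3/2 : ℝ) ^ 2
              * iteratedFDeriv ℝ 4 φ x₀ ![v i, v i, v i, v i] * (lam i) ^ 2 * h ^ 2)
        = (1/24) * ((1/3) * ∑ i, ∑ j, (a i * a i * (a j * a j))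
            * iteratedFDeriv ℝ 4 φ x₀ ![v i, v i, v j, v j]) := by
      rw [hsplit (fun i j => (a i * a i * (a j * a j))
        * iteratedFDeriv ℝ 4 φ x₀ ![v i, v i, v j, v j])]
      rw [mul_add, mul_add]
      congr 1
      · simp_rw [Finset.mul_sum]
        refine Finset.sum_congr rfl fun i _ => Finset.sum_congr rfl fun j _ => ?_
        split_ifs with hij
        · ring
        · rw [ha2 i, ha2 j]; ring
      · simp_rw [Finset.mul_sum]
        refine Finset.sum_congr rfl fun i _ => ?_
        rw [ha2 i]
        ring
    rw [e2, ← e4]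
    ring
  -- conclusion
  rw [htarget, ← Finset.sum_sub_distrib]
  have hstep : ∀ z : Fin d → Fin 3,
      w z * φ (x₀ + u z) - w z * Q z = w z * (φ (x₀ + u z) - Q z) := fun z => by ring
  calc |∑ z : Fin d → Fin 3, (w z * φ (x₀ + u z) - w z * Q z)|
      ≤ ∑ z : Fin d → Fin 3, |w z * φ (x₀ + u z) - w z * Q z| :=
        Finset.abs_sum_le_sum_abs _ _
    _ = ∑ z : Fin d → Fin 3, w z * |φ (x₀ + u z) - Q z| := by
        refine Finset.sum_congr rfl fun z _ => ?_
        rw [hstep z, abs_mul, abs_of_nonneg (hw0 z)]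
    _ ≤ ∑ z : Fin d → Fin 3, w z * (Mφ * (S ^ 6 * h ^ 3) / 120) := by
        refine Finset.sum_le_sum fun z _ => ?_
        refine mul_le_mul_of_nonneg_left ?_ (hw0 z)
        refine le_trans (htay z) ?_
        have := mul_le_mul_of_nonneg_left (hu6 z) hM0
        exact (div_le_div_iff_of_pos_right (by norm_num)).2 this
    _ = Mφ * S ^ 6 / 120 * h ^ 3 := by
        rw [← Finset.sum_mul, hwdef, BeamAux.wsum_one, one_mul]
        ring
end
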